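/- Under the setup, let w ∈ S_{3,3}. If N(w) ∩ S_{2,2} = ∅, then N(w) ∩ I ≠ ∅ and N(w) ∩ J ≠ ∅. Moreover, if w ∈ X' (i.e. there is exactly one edge between w and S_{2,2} ∪ I ∪ J ∪ K ∪ L), then there is exactly one edge between w and S_{2,2}, and N(w) ∩ (I ∪ J ∪ K ∪ L) = ∅. -/
import Mathlib


/-- A finite loopless multigraph on vertex type `V` with edge type `E`:
each edge has an unordered pair of distinct endpoints. -/
structure Multigraph (V : Type) (E : Type) where
  ends : E → Sym2 V
  loopless : ∀ e, ¬ (ends e).IsDiag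

namespace Multigraph

variable {V E : Type}

/-- `ReachIn R n u v` : there is a walk of length `n` from `u` to `v`
along the relation `R`. -/
def ReachIn (R : V → V → Prop) : ℕ → V → V → Prop
  | 0, u, v => u = v
  | n + 1, u, v => ∃ w, R u w ∧ ReachIn R n w v

/-- The distance associated to a relation: the least length of a walk
(with junk value, via `sInf` of the empty set, if there is none). -/
noncomputable def rdist (R : V → V → Prop) (u v : V) : ℕ :=
  sInf {n | ReachIn R n u v}

/-- Adjacency in the multigraph. -/
def Adj (G : Multigraph V E) (u v : V) : Prop := ∃ e, G.ends e = s(u, v)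

/-- Adjacency using edges different from a given edge `e₀`. -/
def AdjOff (G : Multigraph V E) (e₀ : E) (u v : V) : Prop :=
  ∃ e, e ≠ e₀ ∧ G.ends e = s(u, v)

/-- Graph distance. -/
noncomputable def dist (G : Multigraph V E) (u v : V) : ℕ := rdist G.Adj u v

/-- `G` is connected. -/
def Connected (G : Multigraph V E) : Prop := ∀ u v, ∃ n, ReachIn G.Adj n u v

/-- `G` is bridgeless: connected, and deleting any single edge keeps it
connected (i.e. no edge is a bridge). -/
def Bridgeless (G : Multigraph V E) : Prop :=
  G.Connected ∧ ∀ e u v, ∃ n, ReachIn (G.AdjOff e) n u v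

/-- The diameter of `G` equals `d`. -/
def diamIs (G : Multigraph V E) (d : ℕ) : Prop :=
  G.Connected ∧ (∀ u v, G.dist u v ≤ d) ∧ ∃ u v, G.dist u v = d

/-- `l_G(e)`, the length of a shortest cycle through the edge `e`: one more
than the least length of a walk between the two endpoints of `e` avoiding
`e` itself. -/
noncomputable def cycLen (G : Multigraph V E) (e : E) : ℕ :=
  sInf {n | ∃ a b, G.ends e = s(a, b) ∧ ReachIn (G.AdjOff e) n a b} + 1

/-- The edge girth `g*(G)`: the maximum over edges `e` of the length of a
shortest cycle through `e`. -/
noncomputable def edgeGirth (G : Multigraph V E) : ℕ :=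
  sSup (Set.range G.cycLen)

/-- An orientation of `G`: a choice of direction for each edge. -/
structure Orientation (G : Multigraph V E) where
  dir : E → V × V
  compat : ∀ e, s((dir e).1, (dir e).2) = G.ends e

/-- The arc relation of an orientation. -/
def Orientation.DAdj {G : Multigraph V E} (O : G.Orientation) (u v : V) : Prop :=
  ∃ e, O.dir e = (u, v)

/-- An orientation is strong if any vertex can reach any other by a directed
walk. -/
def Orientation.Strong {G : Multigraph V E} (O : G.Orientation) : Prop :=
  ∀ u v, ∃ n, ReachIn O.DAdj n u v

/-- Directed distance in an orientation. -/
noncomputable def Orientation.ddist {G : Multigraph V E} (O : G.Orientation)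
    (u v : V) : ℕ :=
  rdist O.DAdj u v

/-- The oriented diameter of `G` is at most `k`: there is a strong orientation
all of whose directed distances are at most `k`. -/
def orientedDiamLE (G : Multigraph V E) (k : ℕ) : Prop :=
  ∃ O : G.Orientation, O.Strong ∧ ∀ u v, O.ddist u v ≤ k

end Multigraph

namespace Multigraph

variable {V E : Type} (G : Multigraph V E) (u v : V)

/-- The neighbourhood `N(w)` of a vertex `w`. -/
def nbhd (w : V) : Set V := {x | G.Adj w x}

/-- `[w, T]`: the set of edges between the vertex `w` and the set `T`. -/
def edgesTo (w : V) (T : Set V) : Set E := {e | ∃ x ∈ T, G.ends e = s(w, x)}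

/-- `S_{i,j}`: the vertices at distance `i` from `u` and distance `j` from `v`. -/
noncomputable def Sij (i j : ℕ) : Set V := {w | G.dist w u = i ∧ G.dist w v = j}

/-- `A' = {w ∈ S_{1,2} : N(w) ⊆ S_{1,2} ∪ {u}}`. -/
noncomputable def setA' : Set V :=
  {w ∈ Sij G u v 1 2 | G.nbhd w ⊆ Sij G u v 1 2 ∪ {u}}

/-- `A = S_{1,2} − A'`. -/
noncomputable def setA : Set V := Sij G u v 1 2 \ setA' G u v

/-- `B' = {w ∈ S_{2,1} : N(w) ⊆ S_{2,1} ∪ {v}}`. -/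
noncomputable def setB' : Set V :=
  {w ∈ Sij G u v 2 1 | G.nbhd w ⊆ Sij G u v 2 1 ∪ {v}}

/-- `B = S_{2,1} − B'`. -/
noncomputable def setB : Set V := Sij G u v 2 1 \ setB' G u v

/-- `I' = {w ∈ S_{2,3} : N(w) ⊆ S_{2,3} ∪ A}`. -/
noncomputable def setI' : Set V :=
  {w ∈ Sij G u v 2 3 | G.nbhd w ⊆ Sij G u v 2 3 ∪ setA G u v}

/-- `I = S_{2,3} − I'`. -/
noncomputable def setI : Set V := Sij G u v 2 3 \ setI' G u v

/-- `J' = {w ∈ S_{3,2} : N(w) ⊆ S_{3,2} ∪ B}`. -/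
noncomputable def setJ' : Set V :=
  {w ∈ Sij G u v 3 2 | G.nbhd w ⊆ Sij G u v 3 2 ∪ setB G u v}

/-- `J = S_{3,2} − J'`. -/
noncomputable def setJ : Set V := Sij G u v 3 2 \ setJ' G u v

/-- `K' = {w ∈ S_{3,4} : N(w) ⊆ S_{3,4} ∪ I}`. -/
noncomputable def setK' : Set V :=
  {w ∈ Sij G u v 3 4 | G.nbhd w ⊆ Sij G u v 3 4 ∪ setI G u v}

/-- `K = S_{3,4} − K'`. -/
noncomputable def setK : Set V := Sij G u v 3 4 \ setK' G u v

/-- `L' = {w ∈ S_{4,3} : N(w) ⊆ S_{4,3} ∪ J}`. -/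
noncomputable def setL' : Set V :=
  {w ∈ Sij G u v 4 3 | G.nbhd w ⊆ Sij G u v 4 3 ∪ setJ G u v}

/-- `L = S_{4,3} − L'`. -/
noncomputable def setL : Set V := Sij G u v 4 3 \ setL' G u v

/-- `M' = {w ∈ S_{4,4} : |[w, S_{3,3} ∪ K ∪ L]| = 1}`. -/
noncomputable def setM' : Set V :=
  {w ∈ Sij G u v 4 4 |
    (G.edgesTo w (Sij G u v 3 3 ∪ setK G u v ∪ setL G u v)).ncard = 1}

/-- `M = S_{4,4} − M'`. -/
noncomputable def setM : Set V := Sij G u v 4 4 \ setM' G u v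

/-- `X' = {w ∈ S_{3,3} : |[w, S_{2,2} ∪ I ∪ J ∪ K ∪ L]| = 1}`. -/
noncomputable def setX' : Set V :=
  {w ∈ Sij G u v 3 3 |
    (G.edgesTo w (Sij G u v 2 2 ∪ setI G u v ∪ setJ G u v ∪ setK G u v ∪
      setL G u v)).ncard = 1}

/-- `X = S_{3,3} − X'`. -/
noncomputable def setX : Set V := Sij G u v 3 3 \ setX' G u v

lemma reachIn_trans {R : V → V → Prop} : ∀ {m : ℕ} {u : V} {n : ℕ} {x v : V},
    ReachIn R m u x → ReachIn R n x v → ReachIn R (m + n) u v := by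
  intro m
  induction m with
  | zero => intro u n x v h1 h2; cases h1; simpa using h2
  | succ k ih =>
      intro u n x v h1 h2
      obtain ⟨y, hy, h1'⟩ := h1
      rw [Nat.succ_add]
      exact ⟨y, hy, ih h1' h2⟩

lemma dist_le' (G : Multigraph V E) {n : ℕ} {a b : V} (h : ReachIn G.Adj n a b) :
    G.dist a b ≤ n := Nat.sInf_le h

lemma reach_dist (G : Multigraph V E) {a b : V} (h : ∃ n, ReachIn G.Adj n a b) :
    ReachIn G.Adj (G.dist a b) a b := Nat.sInf_mem h

lemma adj_symm (G : Multigraph V E) {a b : V} (h : G.Adj a b) : G.Adj b a := by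
  obtain ⟨e, he⟩ := h
  exact ⟨e, by rw [he, Sym2.eq_swap]⟩

lemma exists_step (G : Multigraph V E) (hc : G.Connected) {w t : V} {k : ℕ}
    (hd : G.dist w t = k + 1) :
    ∃ x, G.Adj w x ∧ ReachIn G.Adj k x t ∧ G.dist x t = k := by
  have hne : ∃ n, ReachIn G.Adj n w t := hc w t
  have hreach := G.reach_dist hne
  rw [hd] at hreach
  obtain ⟨x, hadj, hr⟩ := hreach
  refine ⟨x, hadj, hr, ?_⟩
  have h1 : G.dist x t ≤ k := G.dist_le' hr
  have h2 : ReachIn G.Adj (1 + G.dist x t) w t :=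
    reachIn_trans (show ReachIn G.Adj 1 w x from ⟨x, hadj, rfl⟩)
      (G.reach_dist ⟨k, hr⟩)
  have h3 := G.dist_le' h2
  omega

lemma edgesTo_mono (G : Multigraph V E) {w : V} {S T : Set V} (h : S ⊆ T) :
    G.edgesTo w S ⊆ G.edgesTo w T := fun _ ⟨x, hx, hex⟩ => ⟨x, h hx, hex⟩

end Multigraph

open Multigraph in
/-- Proposition 2.1(ii): for `w ∈ S_{3,3}`, if `N(w) ∩ S_{2,2} = ∅` then
`N(w) ∩ I ≠ ∅` and `N(w) ∩ J ≠ ∅`; and if `w ∈ X'` then `|[w, S_{2,2}]| = 1`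
and `N(w) ∩ (I ∪ J ∪ K ∪ L) = ∅`. -/
theorem S33_neighbour_structure
    {V E : Type} [Fintype V] [Fintype E] (G : Multigraph V E)
    (u v : V) (e₀ : E) (gs : ℕ)
    (hb : G.Bridgeless) (hd : G.diamIs 4)
    (hgs : gs = 4 ∨ gs = 5) (hgirth : G.edgeGirth = gs)
    (he : G.ends e₀ = s(u, v)) (hcyc : G.cycLen e₀ = gs)
    (w : V) (hw : w ∈ Sij G u v 3 3) :
    ((G.nbhd w ∩ Sij G u v 2 2 = ∅ →
        (G.nbhd w ∩ setI G u v).Nonempty ∧ (G.nbhd w ∩ setJ G u v).Nonempty) ∧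
      (w ∈ setX' G u v →
        (G.edgesTo w (Sij G u v 2 2)).ncard = 1 ∧
          G.nbhd w ∩ (setI G u v ∪ setJ G u v ∪ setK G u v ∪ setL G u v) = ∅)) := by
  obtain ⟨hwu, hwv⟩ := hw
  have hc := hd.1
  have hAdjuv : G.Adj u v := ⟨e₀, he⟩
  have hAdjvu : G.Adj v u := G.adj_symm hAdjuv
  have part1 : G.nbhd w ∩ Sij G u v 2 2 = ∅ →
      (G.nbhd w ∩ setI G u v).Nonempty ∧ (G.nbhd w ∩ setJ G u v).Nonempty := by
    intro hemp
    constructor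
    · obtain ⟨x, hadj, hr2, hxu⟩ :=
        G.exists_step hc (show G.dist w u = 2 + 1 by omega)
      have hreach3 : ReachIn G.Adj 3 x v :=
        reachIn_trans hr2 (show ReachIn G.Adj 1 u v from ⟨v, hAdjuv, rfl⟩)
      have hxv3 : G.dist x v ≤ 3 := G.dist_le' hreach3
      have hxv2 : 2 ≤ G.dist x v := by
        have h2 : ReachIn G.Adj (1 + G.dist x v) w v :=
          reachIn_trans (show ReachIn G.Adj 1 w x from ⟨x, hadj, rfl⟩)
            (G.reach_dist ⟨3, hreach3⟩)
        have h3 := G.dist_le' h2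
        omega
      have hxvne2 : G.dist x v ≠ 2 := by
        intro h22
        have hmem : x ∈ G.nbhd w ∩ Sij G u v 2 2 := ⟨hadj, hxu, h22⟩
        rw [hemp] at hmem
        exact hmem
      have hxv : G.dist x v = 3 := by omega
      have hnotI' : x ∉ setI' G u v := by
        intro hx'
        have hwmem : w ∈ Sij G u v 2 3 ∪ setA G u v :=
          hx'.2 (show w ∈ G.nbhd x from G.adj_symm hadj)
        rcases hwmem with h | h
        · have := h.1; omega
        · have := h.1.1; omega
      exact ⟨x, hadj, ⟨hxu, hxv⟩, hnotI'⟩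
    · obtain ⟨y, hadj, hr2, hyv⟩ :=
        G.exists_step hc (show G.dist w v = 2 + 1 by omega)
      have hreach3 : ReachIn G.Adj 3 y u :=
        reachIn_trans hr2 (show ReachIn G.Adj 1 v u from ⟨u, hAdjvu, rfl⟩)
      have hyu3 : G.dist y u ≤ 3 := G.dist_le' hreach3
      have hyu2 : 2 ≤ G.dist y u := by
        have h2 : ReachIn G.Adj (1 + G.dist y u) w u :=
          reachIn_trans (show ReachIn G.Adj 1 w y from ⟨y, hadj, rfl⟩)
            (G.reach_dist ⟨3, hreach3⟩)
        have h3 := G.dist_le' h2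
        omega
      have hyune2 : G.dist y u ≠ 2 := by
        intro h22
        have hmem : y ∈ G.nbhd w ∩ Sij G u v 2 2 := ⟨hadj, h22, hyv⟩
        rw [hemp] at hmem
        exact hmem
      have hyu : G.dist y u = 3 := by omega
      have hnotJ' : y ∉ setJ' G u v := by
        intro hy'
        have hwmem : w ∈ Sij G u v 3 2 ∪ setB G u v :=
          hy'.2 (show w ∈ G.nbhd y from G.adj_symm hadj)
        rcases hwmem with h | h
        · have := h.2; omega
        · have := h.1.2; omega
      exact ⟨y, hadj, ⟨hyu, hyv⟩, hnotJ'⟩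
  refine ⟨part1, ?_⟩
  intro hX'
  have hcard := hX'.2
  obtain ⟨a, ha⟩ := Set.ncard_eq_one.mp hcard
  rcases Set.eq_empty_or_nonempty (G.nbhd w ∩ Sij G u v 2 2) with hemp | hne
  · exfalso
    obtain ⟨⟨x, hx⟩, ⟨y, hy⟩⟩ := part1 hemp
    obtain ⟨e1, he1⟩ := hx.1
    obtain ⟨e2, he2⟩ := hy.1
    have hxI := hx.2
    have hyJ := hy.2
    have hm1 : e1 ∈ G.edgesTo w (Sij G u v 2 2 ∪ setI G u v ∪ setJ G u v ∪
        setK G u v ∪ setL G u v) :=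
      ⟨x, by simp only [Set.mem_union]; tauto, he1⟩
    have hm2 : e2 ∈ G.edgesTo w (Sij G u v 2 2 ∪ setI G u v ∪ setJ G u v ∪
        setK G u v ∪ setL G u v) :=
      ⟨y, by simp only [Set.mem_union]; tauto, he2⟩
    rw [ha, Set.mem_singleton_iff] at hm1 hm2
    have hee : e1 = e2 := by rw [hm1, hm2]
    have hse : s(w, x) = s(w, y) := by rw [← he1, ← he2, hee]
    have hxy : x = y := Sym2.congr_right.mp hse
    have h1 := hxI.1.1
    have h2 := hyJ.1.1
    rw [hxy] at h1
    omega
  · obtain ⟨x, hx⟩ := hne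
    have hx22 := hx.2
    obtain ⟨e1, he1⟩ := hx.1
    have hm1 : e1 ∈ G.edgesTo w (Sij G u v 2 2 ∪ setI G u v ∪ setJ G u v ∪
        setK G u v ∪ setL G u v) :=
      ⟨x, by simp only [Set.mem_union]; tauto, he1⟩
    rw [ha, Set.mem_singleton_iff] at hm1
    constructor
    · have hsub : G.edgesTo w (Sij G u v 2 2) ⊆ {a} := by
        rw [← ha]
        exact G.edgesTo_mono (fun z hz => by
          simp only [Set.mem_union]; tauto)
      have heq : G.edgesTo w (Sij G u v 2 2) = {a} := by
        refine Set.Subset.antisymm hsub ?_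
        rw [Set.singleton_subset_iff, ← hm1]
        exact ⟨x, hx22, he1⟩
      rw [heq, Set.ncard_singleton]
    · rw [Set.eq_empty_iff_forall_notMem]
      rintro y ⟨hyadj, hyU⟩
      obtain ⟨e2, he2⟩ := hyadj
      have hm2 : e2 ∈ G.edgesTo w (Sij G u v 2 2 ∪ setI G u v ∪ setJ G u v ∪
          setK G u v ∪ setL G u v) :=
        ⟨y, by simp only [Set.mem_union] at hyU ⊢; tauto, he2⟩
      rw [ha, Set.mem_singleton_iff] at hm2
      have hse : s(w, x) = s(w, y) := by rw [← he1, ← he2, hm1, hm2]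
      have hxy : x = y := Sym2.congr_right.mp hse
      subst hxy
      have h2u := hx22.1
      have h2v := hx22.2
      rcases hyU with ((hI | hJ) | hK) | hL
      · have := hI.1.2; omega
      · have := hJ.1.1; omega
      · have := hK.1.1; omega
      · have := hL.1.1; omega
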